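/- arXiv:1702.07941 — 6 statements merged into one kernel-verified Lean document; each statement's English description precedes it below -/
import Mathlib

section
/- For every set X, the hyperballean F_X^♭ of the ballean F_X is uniformly locally finite: for every finite subset F ⊆ X there exists n ∈ ℕ (one may take n = 2^{|F|}) such that |B^♭(H,F)| ≤ n for every nonempty finite subset H ⊆ X. -/
/-- The ball `B_F(H,F)` of the ballean `F_X` around a set `H`:
`B_F(H,F) = H ∪ F` if `H ∩ F ≠ ∅` and `B_F(H,F) = H` otherwise. -/
def BFset {X : Type*} [DecidableEq X] (H F : Finset X) : Finset X :=
  if (H ∩ F).Nonempty then H ∪ F else H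

/-- The ball `B^♭(H,F)` of the hyperballean `F_X^♭`:
all nonempty finite `Z` with `Z ⊆ B_F(H,F)` and `H ⊆ B_F(Z,F)`. -/
def hyperballF {X : Type*} [DecidableEq X] (H F : Finset X) : Set (Finset X) :=
  {Z | Z.Nonempty ∧ Z ⊆ BFset H F ∧ H ⊆ BFset Z F}

/-- For every set `X`, the hyperballean `F_X^♭` is uniformly locally finite:
for every finite `F ⊆ X` there is `n ∈ ℕ` with `|B^♭(H,F)| ≤ n` for every
nonempty finite `H ⊆ X`. -/
theorem hyperballean_FX_uniformly_locally_finite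
    {X : Type*} [DecidableEq X] (F : Finset X) :
    ∃ n : ℕ, ∀ H : Finset X, H.Nonempty →
      (hyperballF H F).Finite ∧ (hyperballF H F).ncard ≤ n := by
  refine ⟨2 ^ F.card, fun H _ => ?_⟩
  set S : Finset (Finset X) := F.powerset.image (fun T => (H \ F) ∪ T) with hS
  have hsub : hyperballF H F ⊆ ↑S := by
    intro Z hZ
    obtain ⟨hne, hZsub, hHsub⟩ := hZ
    have h1 : Z ⊆ H ∪ F := by
      refine hZsub.trans ?_
      unfold BFset
      split
      · exact Finset.Subset.refl _
      · exact Finset.subset_union_left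
    have h2 : H \ F ⊆ Z := by
      intro x hx
      rw [Finset.mem_sdiff] at hx
      have hx' := hHsub hx.1
      unfold BFset at hx'
      split at hx'
      · rw [Finset.mem_union] at hx'
        tauto
      · exact hx'
    have hZeq : (H \ F) ∪ (Z ∩ F) = Z := by
      apply Finset.Subset.antisymm
      · exact Finset.union_subset h2 Finset.inter_subset_left
      · intro x hx
        rcases Finset.mem_union.1 (h1 hx) with hxH | hxF
        · by_cases hxF' : x ∈ F
          · exact Finset.mem_union_right _ (Finset.mem_inter.2 ⟨hx, hxF'⟩)
          · exact Finset.mem_union_left _ (Finset.mem_sdiff.2 ⟨hxH, hxF'⟩)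
        · exact Finset.mem_union_right _ (Finset.mem_inter.2 ⟨hx, hxF⟩)
    simp only [hS, Finset.coe_image, Set.mem_image, Finset.mem_coe, Finset.mem_powerset]
    exact ⟨Z ∩ F, Finset.inter_subset_right, hZeq⟩
  have hfin : (hyperballF H F).Finite := S.finite_toSet.subset hsub
  refine ⟨hfin, ?_⟩
  calc (hyperballF H F).ncard ≤ (↑S : Set (Finset X)).ncard :=
        Set.ncard_le_ncard hsub S.finite_toSet
    _ = S.card := by rw [Set.ncard_coe_finset]
    _ ≤ F.powerset.card := Finset.card_image_le
    _ = 2 ^ F.card := Finset.card_powerset F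
end

section
/- Let B be an unbounded ballean on a set X with radii set P. If the hyperballean B^♭ is uniformly locally finite (for every α ∈ P there exists n ∈ ℕ such that |B^♭(H,α)| ≤ n for every nonempty bounded H ⊆ X), then B coincides with F_X, i.e.: (a) for every α ∈ P there is a finite subset F ⊆ X such that B(x,α) = {x} for every x ∉ F and B(x,α) ⊆ F for every x ∈ F; and (b) for every finite F ⊆ X there is α ∈ P with B_F(x,F) ⊆ B(x,α) for all x ∈ X. -/
/-!
For a radius `α`, each ball `B(x,α)` is finite, since its singletons lie in `B^♭({x},α)`. If
infinitely many balls `B(x,α)` were nontrivial, finiteness of the balls would let us pick greedily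
disjoint finite sets `A`, `C` with `|C| = m` and `C ⊆ B(A,α)`; then every `A ∪ T` with `T ⊆ C` lies
in `B^♭(A ∪ C,α)`, so this hyperball has at least `2^m` elements, contradicting uniform local
finiteness. Part (b) only uses that finite sets are bounded.
-/

/-- The ball of radius `α` around a subset `A`: `B(A,α) = ⋃_{a ∈ A} B(a,α)`. -/
def setBall {X P : Type*} (B : X → P → Set X) (A : Set X) (α : P) : Set X :=
  ⋃ a ∈ A, B a α

/-- A subset `Y` is bounded if `Y ⊆ B(x,α)` for some `x` and `α`. -/
def IsBddSet {X P : Type*} (B : X → P → Set X) (Y : Set X) : Prop :=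
  ∃ (x : X) (α : P), Y ⊆ B x α

/-- The ball `B^♭(H,α)` of the hyperballean `B^♭`: all nonempty bounded `Z`
with `Z ⊆ B(H,α)` and `H ⊆ B(Z,α)`. -/
def hyperBall {X P : Type*} (B : X → P → Set X) (H : Set X) (α : P) : Set (Set X) :=
  {Z | Z.Nonempty ∧ IsBddSet B Z ∧ Z ⊆ setBall B H α ∧ H ⊆ setBall B Z α}

section Ballean

variable {X P : Type*} {B : X → P → Set X}

@[simp]
lemma mem_setBall {A : Set X} {α : P} {z : X} : z ∈ setBall B A α ↔ ∃ a ∈ A, z ∈ B a α :=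
  Set.mem_iUnion₂.trans (by simp only [exists_prop])

lemma subset_setBall (hmem : ∀ (x : X) (α : P), x ∈ B x α) (A : Set X) (α : P) :
    A ⊆ setBall B A α :=
  fun a ha => mem_setBall.2 ⟨a, ha, hmem a α⟩

lemma setBall_mono {A A' : Set X} (h : A ⊆ A') (α : P) : setBall B A α ⊆ setBall B A' α :=
  Set.biUnion_subset_biUnion_left h

lemma exists_ball_union_subset_ball (hmem : ∀ (x : X) (α : P), x ∈ B x α)
    (hcomp : ∀ α β : P, ∃ γ : P, ∀ x : X, ∀ y ∈ B x α, B y β ⊆ B x γ) (α β : P) :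
    ∃ γ : P, ∀ x, B x α ∪ B x β ⊆ B x γ := by
  obtain ⟨γ, hγ⟩ := hcomp α β
  exact ⟨γ, fun x => Set.union_subset (fun y hy => hγ x y hy (hmem y β)) (hγ x x (hmem x α))⟩

lemma exists_finite_subset_ball [Nonempty P] (hmem : ∀ (x : X) (α : P), x ∈ B x α)
    (hcomp : ∀ α β : P, ∃ γ : P, ∀ x : X, ∀ y ∈ B x α, B y β ⊆ B x γ)
    (hconn : ∀ x y : X, ∃ α : P, y ∈ B x α) (x : X) {s : Set X} (hs : s.Finite) :
    ∃ γ : P, s ⊆ B x γ := by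
  induction s, hs using Set.Finite.induction_on with
  | empty => exact ⟨Classical.arbitrary P, Set.empty_subset _⟩
  | @insert y s _ _ ih =>
    obtain ⟨α, hα⟩ := ih
    obtain ⟨β, hβ⟩ := hconn x y
    obtain ⟨γ, hγ⟩ := exists_ball_union_subset_ball hmem hcomp α β
    exact ⟨γ, Set.insert_subset (hγ x (.inr hβ)) (hα.trans (Set.subset_union_left.trans (hγ x)))⟩

lemma isBddSet_of_finite [Nonempty P] (hmem : ∀ (x : X) (α : P), x ∈ B x α)
    (hcomp : ∀ α β : P, ∃ γ : P, ∀ x : X, ∀ y ∈ B x α, B y β ⊆ B x γ)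
    (hconn : ∀ x y : X, ∃ α : P, y ∈ B x α) {s : Set X} (hs : s.Finite) (hne : s.Nonempty) :
    IsBddSet B s :=
  let ⟨x, _⟩ := hne
  ⟨x, exists_finite_subset_ball hmem hcomp hconn x hs⟩

lemma exists_forall_finite_subset_ball [Nonempty P] (hmem : ∀ (x : X) (α : P), x ∈ B x α)
    (hsymm : ∀ (x y : X) (α : P), y ∈ B x α ↔ x ∈ B y α)
    (hcomp : ∀ α β : P, ∃ γ : P, ∀ x : X, ∀ y ∈ B x α, B y β ⊆ B x γ)
    (hconn : ∀ x y : X, ∃ α : P, y ∈ B x α) {s : Set X} (hs : s.Finite) :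
    ∃ δ : P, ∀ x ∈ s, s ⊆ B x δ := by
  rcases s.eq_empty_or_nonempty with rfl | ⟨x₀, -⟩
  · exact ⟨Classical.arbitrary P, fun x hx => absurd hx (Set.notMem_empty x)⟩
  obtain ⟨γ, hγ⟩ := exists_finite_subset_ball hmem hcomp hconn x₀ hs
  obtain ⟨δ, hδ⟩ := hcomp γ γ
  exact ⟨δ, fun x hx => hγ.trans (hδ x x₀ ((hsymm x₀ x γ).1 (hγ hx)))⟩

lemma singleton_mem_hyperBall (hsymm : ∀ (x y : X) (α : P), y ∈ B x α ↔ x ∈ B y α)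
    {x y : X} {α : P} (hy : y ∈ B x α) : {y} ∈ hyperBall B {x} α := by
  refine ⟨Set.singleton_nonempty y, ⟨x, α, Set.singleton_subset_iff.2 hy⟩, ?_, ?_⟩
  · simpa using hy
  · simpa using (hsymm x y α).1 hy

lemma finite_ball_of_finite_hyperBall (hsymm : ∀ (x y : X) (α : P), y ∈ B x α ↔ x ∈ B y α)
    {x : X} {α : P} (h : (hyperBall B {x} α).Finite) : (B x α).Finite :=
  (h.preimage Set.singleton_injective.injOn).subset fun _ hy => singleton_mem_hyperBall hsymm hy

lemma mem_hyperBall_of_subset (hmem : ∀ (x : X) (α : P), x ∈ B x α) {A Z H : Set X} {α : P}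
    (hA : A.Nonempty) (hZ : IsBddSet B Z) (hAZ : A ⊆ Z) (hZH : Z ⊆ H)
    (hH : H ⊆ setBall B A α) : Z ∈ hyperBall B H α :=
  ⟨hA.mono hAZ, hZ, hZH.trans (subset_setBall hmem H α), hH.trans (setBall_mono hAZ α)⟩

/-- The greedy construction: a new point `s` with a partner `y ≠ s` in `B(s,α)` is picked outside
the finite set `B(A ∪ C,α)`, which keeps both `s` and `y` away from `A ∪ C`. -/
lemma exists_disjoint_subset_setBall_card_eq [DecidableEq X]
    (hmem : ∀ (x : X) (α : P), x ∈ B x α) (hsymm : ∀ (x y : X) (α : P), y ∈ B x α ↔ x ∈ B y α)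
    {α : P} (hball : ∀ x, (B x α).Finite) (hS : {x | B x α ≠ {x}}.Infinite) (m : ℕ) :
    ∃ A C : Finset X, Disjoint A C ∧ C.card = m ∧ (C : Set X) ⊆ setBall B A α := by
  induction m with
  | zero => exact ⟨∅, ∅, disjoint_bot_left, rfl, by simp⟩
  | succ m ih =>
    obtain ⟨A, C, hAC, hcard, hCA⟩ := ih
    have hfar : (setBall B ↑(A ∪ C) α).Finite := (A ∪ C).finite_toSet.biUnion fun t _ => hball t
    obtain ⟨s, hsS, hs⟩ := (hS.sdiff hfar).nonempty
    obtain ⟨y, hy, hys⟩ : ∃ y ∈ B s α, y ≠ s := by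
      by_contra! h
      exact hsS (Set.eq_singleton_iff_unique_mem.2 ⟨hmem s α, h⟩)
    have hsAC : s ∉ A ∪ C := fun h => hs (mem_setBall.2 ⟨s, h, hmem s α⟩)
    have hyAC : y ∉ A ∪ C := fun h => hs (mem_setBall.2 ⟨y, h, (hsymm s y α).1 hy⟩)
    simp only [Finset.mem_union, not_or] at hsAC hyAC
    refine ⟨insert s A, insert y C, ?_, ?_, ?_⟩
    · simp [hAC, hsAC.2, hyAC.1, hys]
    · rw [Finset.card_insert_of_notMem hyAC.2, hcard]
    · rw [Finset.coe_insert, Finset.coe_insert]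
      exact Set.insert_subset (mem_setBall.2 ⟨s, Set.mem_insert s _, hy⟩)
        (hCA.trans (setBall_mono (Set.subset_insert s _) α))

lemma two_pow_card_le_ncard_hyperBall [DecidableEq X] [Nonempty P]
    (hmem : ∀ (x : X) (α : P), x ∈ B x α)
    (hcomp : ∀ α β : P, ∃ γ : P, ∀ x : X, ∀ y ∈ B x α, B y β ⊆ B x γ)
    (hconn : ∀ x y : X, ∃ α : P, y ∈ B x α) {α : P} {A C : Finset X} (hA : A.Nonempty)
    (hAC : Disjoint A C) (hCA : (C : Set X) ⊆ setBall B A α)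
    (hfin : (hyperBall B ↑(A ∪ C) α).Finite) :
    2 ^ C.card ≤ (hyperBall B ↑(A ∪ C) α).ncard := by
  rw [← Finset.card_powerset, ← Set.ncard_coe_finset]
  refine Set.ncard_le_ncard_of_injOn (fun T => ((A ∪ T : Finset X) : Set X)) ?_ ?_ hfin
  · intro T hT
    have hTC : T ⊆ C := Finset.mem_powerset.1 hT
    have hAT : ((A ∪ T : Finset X) : Set X).Nonempty :=
      Finset.coe_nonempty.2 (hA.mono Finset.subset_union_left)
    refine mem_hyperBall_of_subset hmem (Finset.coe_nonempty.2 hA)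
      (isBddSet_of_finite hmem hcomp hconn (Finset.finite_toSet _) hAT) ?_ ?_ ?_
    · exact_mod_cast Finset.subset_union_left
    · exact_mod_cast Finset.union_subset_union_right hTC
    · rw [Finset.coe_union]
      exact Set.union_subset (subset_setBall hmem _ α) hCA
  · intro T₁ h₁ T₂ h₂ heq
    have hT₁ := hAC.mono_right (Finset.mem_powerset.1 h₁)
    have hT₂ := hAC.mono_right (Finset.mem_powerset.1 h₂)
    rw [← Finset.union_sdiff_cancel_left hT₁, ← Finset.union_sdiff_cancel_left hT₂,
      Finset.coe_injective heq]

lemma finite_setOf_ball_ne_singleton [Nonempty P]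
    (hmem : ∀ (x : X) (α : P), x ∈ B x α) (hsymm : ∀ (x y : X) (α : P), y ∈ B x α ↔ x ∈ B y α)
    (hcomp : ∀ α β : P, ∃ γ : P, ∀ x : X, ∀ y ∈ B x α, B y β ⊆ B x γ)
    (hconn : ∀ x y : X, ∃ α : P, y ∈ B x α) {α : P} {n : ℕ} (hball : ∀ x, (B x α).Finite)
    (hULF : ∀ H : Set X, H.Nonempty → IsBddSet B H →
      (hyperBall B H α).Finite ∧ (hyperBall B H α).ncard ≤ n) :
    {x | B x α ≠ {x}}.Finite := by
  classical
  by_contra hS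
  obtain ⟨A, C, hAC, hcard, hCA⟩ :=
    exists_disjoint_subset_setBall_card_eq hmem hsymm hball hS (n + 1)
  obtain ⟨c, hc⟩ : C.Nonempty := Finset.card_pos.1 (by omega)
  have hA : A.Nonempty := by
    obtain ⟨a, ha, -⟩ := mem_setBall.1 (hCA hc)
    exact ⟨a, ha⟩
  have hH : ((A ∪ C : Finset X) : Set X).Nonempty :=
    Finset.coe_nonempty.2 ⟨c, Finset.mem_union_right A hc⟩
  obtain ⟨hfin, hle⟩ := hULF _ hH (isBddSet_of_finite hmem hcomp hconn (Finset.finite_toSet _) hH)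
  have h2m := (two_pow_card_le_ncard_hyperBall hmem hcomp hconn hA hAC hCA hfin).trans hle
  rw [hcard] at h2m
  exact (Nat.lt_two_pow_self.trans' n.lt_succ_self).not_ge h2m

lemma exists_finset_ball_eq_singleton_of_finite (hmem : ∀ (x : X) (α : P), x ∈ B x α) {α : P}
    (hball : ∀ x, (B x α).Finite) (hS : {x | B x α ≠ {x}}.Finite) :
    ∃ F : Finset X, (∀ x ∉ F, B x α = {x}) ∧ ∀ x ∈ F, B x α ⊆ (F : Set X) := by
  have hF : (setBall B {x | B x α ≠ {x}} α).Finite := hS.biUnion fun x _ => hball x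
  refine ⟨hF.toFinset, fun x hx => ?_, fun x hx => ?_⟩
  · by_contra h
    exact hx (hF.mem_toFinset.2 (subset_setBall hmem _ α h))
  · rw [hF.coe_toFinset]
    by_cases h : B x α = {x}
    · rw [h, Set.singleton_subset_iff]
      exact hF.mem_toFinset.1 hx
    · exact fun y hy => mem_setBall.2 ⟨x, h, hy⟩

end Ballean

theorem hyperballean_ulf_implies_FX_general
    {X P : Type*} [DecidableEq X] [Nonempty P] (B : X → P → Set X)
    (hmem : ∀ (x : X) (α : P), x ∈ B x α)
    (hsymm : ∀ (x y : X) (α : P), y ∈ B x α ↔ x ∈ B y α)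
    (hcomp : ∀ α β : P, ∃ γ : P, ∀ x : X, ∀ y ∈ B x α, B y β ⊆ B x γ)
    (hconn : ∀ x y : X, ∃ α : P, y ∈ B x α)
    (hULF : ∀ α : P, ∃ n : ℕ, ∀ H : Set X, H.Nonempty → IsBddSet B H →
      (hyperBall B H α).Finite ∧ (hyperBall B H α).ncard ≤ n) :
    (∀ α : P, ∃ F : Finset X,
      (∀ x : X, x ∉ F → B x α = {x}) ∧ (∀ x ∈ F, B x α ⊆ (F : Set X))) ∧
    (∀ F : Finset X, ∃ α : P, ∀ x : X,
      (if x ∈ F then (F : Set X) else {x}) ⊆ B x α) := by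
  refine ⟨fun α => ?_, fun F => ?_⟩
  · obtain ⟨n, hn⟩ := hULF α
    have hball x : (B x α).Finite := finite_ball_of_finite_hyperBall hsymm <|
      (hn {x} (Set.singleton_nonempty x) ⟨x, α, Set.singleton_subset_iff.2 (hmem x α)⟩).1
    exact exists_finset_ball_eq_singleton_of_finite hmem hball
      (finite_setOf_ball_ne_singleton hmem hsymm hcomp hconn hball hn)
  · obtain ⟨δ, hδ⟩ := exists_forall_finite_subset_ball hmem hsymm hcomp hconn F.finite_toSet
    refine ⟨δ, fun x => ?_⟩
    split_ifs with hx
    · exact hδ x hx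
    · exact Set.singleton_subset_iff.2 (hmem x δ)

/-- Theorem 1(i), necessity: if `B` is an unbounded ballean on `X` whose
hyperballean `B^♭` is uniformly locally finite, then `B = F_X`:
(a) for every `α` there is a finite `F ⊆ X` with `B(x,α) = {x}` for `x ∉ F`
and `B(x,α) ⊆ F` for `x ∈ F`; and (b) for every finite `F ⊆ X` there is `α`
with `B_F(x,F) ⊆ B(x,α)` for all `x`. -/
theorem hyperballean_ulf_implies_FX
    {X P : Type*} [DecidableEq X] [Nonempty P] (B : X → P → Set X)
    (hmem : ∀ (x : X) (α : P), x ∈ B x α)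
    (hsymm : ∀ (x y : X) (α : P), y ∈ B x α ↔ x ∈ B y α)
    (hcomp : ∀ α β : P, ∃ γ : P, ∀ x : X, ∀ y ∈ B x α, B y β ⊆ B x γ)
    (hconn : ∀ x y : X, ∃ α : P, y ∈ B x α)
    (hunb : ¬ IsBddSet B Set.univ)
    (hULF : ∀ α : P, ∃ n : ℕ, ∀ H : Set X, H.Nonempty → IsBddSet B H →
      (hyperBall B H α).Finite ∧ (hyperBall B H α).ncard ≤ n) :
    (∀ α : P, ∃ F : Finset X,
      (∀ x : X, x ∉ F → B x α = {x}) ∧ (∀ x ∈ F, B x α ⊆ (F : Set X))) ∧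
    (∀ F : Finset X, ∃ α : P, ∀ x : X,
      (if x ∈ F then (F : Set X) else {x}) ⊆ B x α) :=
  hyperballean_ulf_implies_FX_general B hmem hsymm hcomp hconn hULF
end

section
/- Let B be an unbounded ballean on a set X with radii set P, and suppose there exists a large subset Y ⊆ X such that the subballean B_Y coincides with F_Y, i.e.: for every α ∈ P there is a finite F ⊆ Y with B(y,α) ∩ Y = {y} for every y ∈ Y∖F and B(y,α) ∩ Y ⊆ F for every y ∈ F, and for every finite F ⊆ Y there is α ∈ P with F ⊆ B(y,α) for every y ∈ F. Then the hyperballean B^♭ is of bounded geometry: there exist α ∈ P and a function f : P → ℕ such that for every β ∈ P, every H ∈ X^♭, and every α-discrete subset S of B^♭(H,β), one has |S| ≤ f(β). -/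
theorem mem_setBall_iff {X P : Type*} (B : X → P → Set X) (A : Set X) (α : P) (x : X) :
    x ∈ setBall B A α ↔ ∃ a ∈ A, x ∈ B a α := by
  simp [setBall]

/-- Theorem 1(ii), sufficiency: if `B` is an unbounded ballean on `X` possessing
a large subset `Y` with `B_Y = F_Y`, then the hyperballean `B^♭` is of bounded
geometry: there are `α ∈ P` and `f : P → ℕ` such that every `α`-discrete subset
`S` of a ball `B^♭(H,β)` satisfies `|S| ≤ f(β)`. -/
theorem sub_FY_implies_hyperballean_bounded_geometry
    {X P : Type*} [Nonempty P] (B : X → P → Set X) (Y : Set X)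
    (hmem : ∀ (x : X) (α : P), x ∈ B x α)
    (hsymm : ∀ (x y : X) (α : P), y ∈ B x α ↔ x ∈ B y α)
    (hcomp : ∀ α β : P, ∃ γ : P, ∀ x : X, ∀ y ∈ B x α, B y β ⊆ B x γ)
    (hconn : ∀ x y : X, ∃ α : P, y ∈ B x α)
    (hunb : ¬ IsBddSet B Set.univ)
    (hlarge : ∃ β : P, ∀ x : X, x ∈ setBall B Y β)
    (hFY1 : ∀ α : P, ∃ F : Finset X, (F : Set X) ⊆ Y ∧
      (∀ y ∈ Y, y ∉ F → B y α ∩ Y = {y}) ∧ (∀ y ∈ F, B y α ∩ Y ⊆ (F : Set X)))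
    (hFY2 : ∀ F : Finset X, (F : Set X) ⊆ Y →
      ∃ α : P, ∀ y ∈ F, (F : Set X) ⊆ B y α) :
    ∃ (α : P) (f : P → ℕ), ∀ (β : P) (H : Set X), H.Nonempty → IsBddSet B H →
      ∀ S : Set (Set X), S ⊆ hyperBall B H β →
        (∀ T ∈ S, hyperBall B T α ∩ S = {T}) →
        S.Finite ∧ S.ncard ≤ f β := by
  classical
  obtain ⟨β₀, hβ₀⟩ := hlarge
  choose γ hγ using hcomp
  choose F hFsub hF1 _hF2 using hFY1
  set ε : P → P := fun β => γ (γ β₀ β) β₀ with hεdef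
  refine ⟨γ β₀ β₀, fun β => 2 ^ (F (ε β)).card, ?_⟩
  intro β H hHne hHbd S hS hdisc
  set Fε : Finset X := F (ε β) with hFεdef
  set φ : Set X → Set X := fun Z => Y ∩ setBall B Z β₀ with hφdef
  set YH : Set X := Y ∩ setBall B H β₀ with hYHdef
  -- the key "chain" estimate
  have chain : ∀ (A C : Set X), C ⊆ setBall B A β →
      Y ∩ setBall B C β₀ ⊆ setBall B (Y ∩ setBall B A β₀) (ε β) := by
    rintro A C hCA w ⟨hwY, hwball⟩
    obtain ⟨c, hc, hwc⟩ := (mem_setBall_iff B C β₀ w).1 hwball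
    obtain ⟨a, ha, hca⟩ := (mem_setBall_iff B A β c).1 (hCA hc)
    obtain ⟨y, hy, hay⟩ := (mem_setBall_iff B Y β₀ a).1 (hβ₀ a)
    have hcy : c ∈ B y (γ β₀ β) := hγ β₀ β y a hay hca
    have hwy : w ∈ B y (ε β) := hγ (γ β₀ β) β₀ y c hcy hwc
    exact (mem_setBall_iff B _ _ w).2
      ⟨y, ⟨hy, (mem_setBall_iff B A β₀ y).2 ⟨a, ha, (hsymm y a β₀).1 hay⟩⟩, hwy⟩
  -- φ Z agrees with YH outside Fε, for every Z ∈ S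
  have claim2 : ∀ Z ∈ S, φ Z \ (Fε : Set X) = YH \ (Fε : Set X) := by
    intro Z hZ
    obtain ⟨-, -, hZH, hHZ⟩ := hS hZ
    have ha : φ Z ⊆ setBall B YH (ε β) := chain H Z hZH
    have hb : YH ⊆ setBall B (φ Z) (ε β) := chain Z H hHZ
    ext w
    constructor
    · rintro ⟨hwφ, hwF⟩
      obtain ⟨y, hyYH, hwy⟩ := (mem_setBall_iff B YH (ε β) w).1 (ha hwφ)
      have hw1 : B w (ε β) ∩ Y = {w} := hF1 (ε β) w hwφ.1 hwF
      have : y ∈ B w (ε β) ∩ Y := ⟨(hsymm y w (ε β)).1 hwy, hyYH.1⟩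
      rw [hw1] at this
      exact ⟨this ▸ hyYH, hwF⟩
    · rintro ⟨hwYH, hwF⟩
      obtain ⟨y, hyφ, hwy⟩ := (mem_setBall_iff B (φ Z) (ε β) w).1 (hb hwYH)
      have hw1 : B w (ε β) ∩ Y = {w} := hF1 (ε β) w hwYH.1 hwF
      have : y ∈ B w (ε β) ∩ Y := ⟨(hsymm y w (ε β)).1 hwy, hyφ.1⟩
      rw [hw1] at this
      exact ⟨this ▸ hyφ, hwF⟩
  -- α-discreteness + φ Z₁ = φ Z₂ forces Z₁ = Z₂
  have claim3 : ∀ Z₁ ∈ S, ∀ Z₂ ∈ S, φ Z₁ = φ Z₂ → Z₁ = Z₂ := by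
    intro Z₁ hZ₁ Z₂ hZ₂ hφeq
    have key : ∀ (W₁ W₂ : Set X), φ W₁ = φ W₂ → W₂ ⊆ setBall B W₁ (γ β₀ β₀) := by
      intro W₁ W₂ heq z hz
      obtain ⟨y, hy, hzy⟩ := (mem_setBall_iff B Y β₀ z).1 (hβ₀ z)
      have hyφ : y ∈ φ W₂ := ⟨hy, (mem_setBall_iff B W₂ β₀ y).2 ⟨z, hz, (hsymm y z β₀).1 hzy⟩⟩
      rw [← heq] at hyφ
      obtain ⟨w, hw, hyw⟩ := (mem_setBall_iff B W₁ β₀ y).1 hyφ.2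
      exact (mem_setBall_iff B W₁ _ z).2 ⟨w, hw, hγ β₀ β₀ w y hyw hzy⟩
    have h2 : Z₂ ∈ hyperBall B Z₁ (γ β₀ β₀) := by
      obtain ⟨hne, hbd, -, -⟩ := hS hZ₂
      exact ⟨hne, hbd, key Z₁ Z₂ hφeq, key Z₂ Z₁ hφeq.symm⟩
    have := hdisc Z₁ hZ₁
    have : Z₂ ∈ ({Z₁} : Set (Set X)) := this ▸ Set.mem_inter h2 hZ₂
    exact this.symm
  -- the finite invariant
  set g : Set X → Finset X := fun Z => Fε.filter (fun x => x ∈ setBall B Z β₀) with hgdef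
  have hφg : ∀ Z ∈ S, φ Z = (g Z : Set X) ∪ (YH \ (Fε : Set X)) := by
    intro Z hZ
    have h2 := claim2 Z hZ
    ext x
    simp only [hgdef, Finset.coe_filter, Set.mem_union, Set.mem_setOf_eq]
    constructor
    · intro hx
      by_cases hxF : x ∈ Fε
      · exact Or.inl ⟨hxF, hx.2⟩
      · exact Or.inr (h2 ▸ (⟨hx, hxF⟩ : x ∈ φ Z \ (Fε : Set X)))
    · rintro (⟨hxF, hxb⟩ | hx)
      · exact ⟨hFsub (ε β) hxF, hxb⟩
      · exact (h2.symm ▸ hx : x ∈ φ Z \ (Fε : Set X)).1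
  have ginj : Set.InjOn g S := by
    intro Z₁ hZ₁ Z₂ hZ₂ hgeq
    refine claim3 Z₁ hZ₁ Z₂ hZ₂ ?_
    rw [hφg Z₁ hZ₁, hφg Z₂ hZ₂, hgeq]
  have hgsub : g '' S ⊆ (Fε.powerset : Finset (Finset X)) := by
    rintro - ⟨Z, -, rfl⟩
    simp only [Finset.coe_powerset, Set.mem_preimage, Set.mem_powerset_iff, hgdef]
    exact_mod_cast Finset.filter_subset _ _
  have himfin : (g '' S).Finite := Set.Finite.subset (Fε.powerset).finite_toSet hgsub
  have hSfin : S.Finite := Set.Finite.of_finite_image himfin ginj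
  refine ⟨hSfin, ?_⟩
  calc S.ncard = (g '' S).ncard := (Set.ncard_image_of_injOn ginj).symm
    _ ≤ (Fε.powerset : Finset (Finset X)).card := by
        rw [← Set.ncard_coe_finset]
        exact Set.ncard_le_ncard hgsub (Fε.powerset).finite_toSet
    _ = 2 ^ Fε.card := Finset.card_powerset Fε
end

section
/- Let B be a ballean on a set X with radii set P, and let Y ⊆ X be a large subset, say B(Y,β) = X for some β ∈ P. Then the family Y^♭ of all nonempty bounded subsets of X contained in Y is large in the hyperballean B^♭: B^♭(Y^♭,β) = X^♭, i.e. for every nonempty bounded Z ⊆ X there exists a nonempty bounded W ⊆ Y with Z ⊆ B(W,β) and W ⊆ B(Z,β). -/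
/-- If `Y` is a large subset of the support of a ballean `B`, witnessed by
`β` with `B(Y,β) = X`, then `Y^♭` (the nonempty bounded subsets of `X`
contained in `Y`) is large in the hyperballean `B^♭`, witnessed by the
same radius `β`: every nonempty bounded `Z ⊆ X` lies in `B^♭(W,β)` for some
nonempty bounded `W ⊆ Y`. -/
theorem large_subset_gives_large_hyper
    {X P : Type*} [Nonempty P] (B : X → P → Set X) (Y : Set X) (β : P)
    (hmem : ∀ (x : X) (α : P), x ∈ B x α)
    (hsymm : ∀ (x y : X) (α : P), y ∈ B x α ↔ x ∈ B y α)
    (hcomp : ∀ α β' : P, ∃ γ : P, ∀ x : X, ∀ y ∈ B x α, B y β' ⊆ B x γ)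
    (hconn : ∀ x y : X, ∃ α : P, y ∈ B x α)
    (hlarge : ∀ x : X, x ∈ setBall B Y β) :
    ∀ Z : Set X, Z.Nonempty → IsBddSet B Z →
      ∃ W : Set X, W.Nonempty ∧ IsBddSet B W ∧ W ⊆ Y ∧
        Z ⊆ setBall B W β ∧ W ⊆ setBall B Z β := by
  intro Z hZne hZbdd
  refine ⟨Y ∩ setBall B Z β, ?_, ?_, Set.inter_subset_left, ?_, Set.inter_subset_right⟩
  · obtain ⟨z, hz⟩ := hZne
    obtain ⟨y, hy, hzy⟩ := by
      simpa [setBall] using hlarge z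
    exact ⟨y, hy, Set.mem_biUnion hz ((hsymm y z β).mp hzy)⟩
  · obtain ⟨x, α, hx⟩ := hZbdd
    obtain ⟨γ, hγ⟩ := hcomp α β
    refine ⟨x, γ, fun w hw => ?_⟩
    obtain ⟨z, hz, hwz⟩ := by
      simpa [setBall] using hw.2
    exact hγ x z (hx hz) hwz
  · intro z hz
    obtain ⟨y, hy, hzy⟩ := by
      simpa [setBall] using hlarge z
    exact Set.mem_biUnion ⟨hy, Set.mem_biUnion hz ((hsymm y z β).mp hzy)⟩ hzy
end

section
/- Let κ be an infinite set and n ≥ 1 a natural number, and let [κ]^n denote the set of all n-element subsets of κ. Then the subballean of the hyperballean F_κ^♭ with support [κ]^n is asymptotically scattered: for every infinite subset Y ⊆ [κ]^n there exists a finite subset α ⊆ κ such that for every finite subset β ⊆ κ there exists F ∈ Y with (B^♭(F,β) ∖ B^♭(F,α)) ∩ Y = ∅. -/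
/-- Theorem 2(i): for an infinite `κ` and `n ≥ 1`, the subballean of `F_κ^♭`
with support `[κ]^n` is asymptotically scattered: for every infinite
`Y ⊆ [κ]^n` there is a finite `α ⊆ κ` such that for every finite `β ⊆ κ`
there is `F ∈ Y` with `(B^♭(F,β) ∖ B^♭(F,α)) ∩ Y = ∅`. -/
theorem n_subsets_asymptotically_scattered
    {κ : Type*} [Infinite κ] [DecidableEq κ] (n : ℕ) (hn : 1 ≤ n)
    (Y : Set (Finset κ)) (hYn : ∀ F ∈ Y, F.card = n) (hYinf : Y.Infinite) :
    ∃ α : Finset κ, ∀ β : Finset κ, ∃ F ∈ Y,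
      (hyperballF F β \ hyperballF F α) ∩ Y = ∅ := by
  classical
  set G : ℕ → Prop := fun q => ∃ α : Finset κ, {Z | Z ∈ Y ∧ q < (Z \ α).card}.Finite with hGdef
  have hGn : G n := by
    refine ⟨∅, ?_⟩
    convert Set.finite_empty
    ext Z
    simp only [Set.mem_setOf_eq, Set.mem_empty_iff_false, iff_false, not_and, not_lt]
    intro hZ
    rw [Finset.sdiff_empty, hYn Z hZ]
  have hex : ∃ q, G q := ⟨n, hGn⟩
  set p := Nat.find hex with hpdef
  have hp : G p := Nat.find_spec hex
  have hp' : ∀ q < p, ¬ G q := fun q hq => Nat.find_min hex hq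
  have hp1 : 1 ≤ p := by
    by_contra h
    push_neg at h
    interval_cases p
    · obtain ⟨α₀, hfin⟩ := hp
      have hsub : Y ⊆ {Z | Z ∈ Y ∧ 0 < (Z \ α₀).card} ∪ ↑(α₀.powerset) := by
        intro Z hZ
        by_cases hc : 0 < (Z \ α₀).card
        · exact Or.inl ⟨hZ, hc⟩
        · right
          push_neg at hc
          have : Z \ α₀ = ∅ := Finset.card_eq_zero.mp (Nat.le_zero.mp hc)
          simp only [Finset.coe_powerset, Set.mem_preimage, Set.mem_powerset_iff,
            Finset.coe_subset, Finset.mem_coe, Finset.mem_powerset]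
          exact Finset.sdiff_eq_empty_iff_subset.mp this
      exact hYinf (Set.Finite.subset (hfin.union (α₀.powerset.finite_toSet)) hsub)
  obtain ⟨α₀, hfin⟩ := hp
  set W := hfin.toFinset with hWdef
  set α : Finset κ := α₀ ∪ W.biUnion id with hαdef
  have hbound : ∀ Z ∈ Y, (Z \ α).card ≤ p := by
    intro Z hZ
    by_cases hc : p < (Z \ α₀).card
    · have hZW : Z ∈ W := hfin.mem_toFinset.mpr ⟨hZ, hc⟩
      have hZα : Z ⊆ α := fun x hx =>
        Finset.mem_union_right _ (Finset.mem_biUnion.mpr ⟨Z, hZW, hx⟩)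
      have : Z \ α = ∅ := Finset.sdiff_eq_empty_iff_subset.mpr hZα
      rw [this]
      simp only [Finset.card_empty]
      omega
    · push_neg at hc
      calc (Z \ α).card ≤ (Z \ α₀).card :=
            Finset.card_le_card (Finset.sdiff_subset_sdiff (le_refl _) Finset.subset_union_left)
        _ ≤ p := hc
  refine ⟨α, fun β => ?_⟩
  -- find F with |F \ α| = p and (F \ α) ∩ β = ∅
  have hninf : ¬ {Z | Z ∈ Y ∧ p - 1 < (Z \ (α ∪ β)).card}.Finite := by
    intro hf
    exact hp' (p - 1) (by omega) ⟨α ∪ β, hf⟩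
  have hne : {Z | Z ∈ Y ∧ p - 1 < (Z \ (α ∪ β)).card}.Nonempty :=
    Set.Infinite.nonempty hninf
  obtain ⟨F, hFY, hFq⟩ := hne
  have hple : p ≤ (F \ (α ∪ β)).card := by omega
  have hsub2 : F \ (α ∪ β) ⊆ F \ α :=
    Finset.sdiff_subset_sdiff (le_refl _) Finset.subset_union_left
  have hcard : (F \ α).card ≤ p := hbound F hFY
  have heq : F \ (α ∪ β) = F \ α :=
    Finset.eq_of_subset_of_card_le hsub2 (by omega)
  have hdisj : ∀ x ∈ F \ α, x ∉ β := by
    intro x hx hxβ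
    rw [← heq] at hx
    exact (Finset.mem_sdiff.mp hx).2 (Finset.mem_union_right _ hxβ)
  have hPcard : (F \ α).card = p := by
    have : p ≤ (F \ α).card := heq ▸ hple
    omega
  refine ⟨F, hFY, ?_⟩
  ext Z
  simp only [Set.mem_inter_iff, Set.mem_diff, Set.mem_empty_iff_false, iff_false, not_and]
  rintro ⟨hZβ, hZα⟩ hZY
  apply hZα
  obtain ⟨hZne, hZsubβ, hFsubβ⟩ := hZβ
  have hZcard := hYn Z hZY
  have hFcard := hYn F hFY
  have hFself : ∀ (A B : Finset κ), A ⊆ BFset A B := by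
    intro A B
    unfold BFset
    split
    · exact Finset.subset_union_left
    · exact Finset.Subset.refl _
  -- Z ⊆ F ∪ β
  have h1 : Z ⊆ F ∪ β := by
    refine hZsubβ.trans ?_
    unfold BFset
    split
    · exact Finset.Subset.refl _
    · exact Finset.subset_union_left
  -- F \ β ⊆ Z
  have h2 : F \ β ⊆ Z := by
    have hFZβ : F ⊆ Z ∪ β := by
      refine hFsubβ.trans ?_
      unfold BFset
      split
      · exact Finset.Subset.refl _
      · exact Finset.subset_union_left
    intro x hx
    rcases Finset.mem_union.mp (hFZβ (Finset.mem_sdiff.mp hx).1) with h | h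
    · exact h
    · exact absurd h (Finset.mem_sdiff.mp hx).2
  -- F \ α ⊆ Z \ α
  have hPZ : F \ α ⊆ Z \ α := by
    intro x hx
    have hxF := (Finset.mem_sdiff.mp hx).1
    have hxα := (Finset.mem_sdiff.mp hx).2
    exact Finset.mem_sdiff.mpr ⟨h2 (Finset.mem_sdiff.mpr ⟨hxF, hdisj x hx⟩), hxα⟩
  have hZα_eq : Z \ α = F \ α := by
    refine (Finset.eq_of_subset_of_card_le hPZ ?_).symm
    rw [hPcard]
    exact hbound Z hZY
  by_cases hZF : Z = F
  · subst hZF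
    exact ⟨hZne, hFself Z α, hFself Z α⟩
  · have hZαne : (Z ∩ α).Nonempty := by
      by_contra h
      rw [Finset.not_nonempty_iff_eq_empty] at h
      have hZd : Z \ α = Z := by
        rw [Finset.sdiff_eq_self_iff_disjoint, Finset.disjoint_iff_inter_eq_empty]
        exact h
      have hZFsub : Z ⊆ F := by
        rw [← hZd, hZα_eq]
        exact Finset.sdiff_subset
      exact hZF (Finset.eq_of_subset_of_card_le hZFsub (by rw [hZcard, hFcard]))
    have hFαne : (F ∩ α).Nonempty := by
      by_contra h
      rw [Finset.not_nonempty_iff_eq_empty] at h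
      have hFd : F \ α = F := by
        rw [Finset.sdiff_eq_self_iff_disjoint, Finset.disjoint_iff_inter_eq_empty]
        exact h
      have hFZsub : F ⊆ Z := by
        rw [← hFd, ← hZα_eq]
        exact Finset.sdiff_subset
      exact hZF ((Finset.eq_of_subset_of_card_le hFZsub (by rw [hZcard, hFcard])).symm)
    refine ⟨hZne, ?_, ?_⟩
    · rw [BFset, if_pos hFαne]
      intro x hx
      by_cases hxα : x ∈ α
      · exact Finset.mem_union_right _ hxα
      · have hxm : x ∈ Z \ α := Finset.mem_sdiff.mpr ⟨hx, hxα⟩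
        rw [hZα_eq] at hxm
        exact Finset.mem_union_left _ (Finset.mem_sdiff.mp hxm).1
    · rw [BFset, if_pos hZαne]
      intro x hx
      by_cases hxα : x ∈ α
      · exact Finset.mem_union_right _ hxα
      · have hxm : x ∈ F \ α := Finset.mem_sdiff.mpr ⟨hx, hxα⟩
        rw [← hZα_eq] at hxm
        exact Finset.mem_union_left _ (Finset.mem_sdiff.mp hxm).1
end

section
/- Let κ be an infinite set, x ∈ κ, and n ≥ 1. Then the map F ↦ F ∖ {x} is an asymorphism between the subballean of F_κ^♭ with support {F ⊆ κ : |F| = n+1, x ∈ F} and the subballean of F_κ^♭ with support {G ⊆ κ : |G| = n, x ∉ G}: it is a bijection between these supports, and for every finite H ⊆ κ there is a finite H' ⊆ κ such that for all F, F' in the first support, F' ∈ B^♭(F,H) implies F' ∖ {x} ∈ B^♭(F ∖ {x}, H'), and for all G, G' in the second support, G' ∈ B^♭(G,H) implies G' ∪ {x} ∈ B^♭(G ∪ {x}, H'). -/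
lemma subset_BFset_self {X : Type*} [DecidableEq X] (Z H : Finset X) : Z ⊆ BFset Z H := by
  unfold BFset; split
  · exact Finset.subset_union_left
  · exact subset_rfl

lemma mem_hyperballF_self {X : Type*} [DecidableEq X] {Z : Finset X} (hZ : Z.Nonempty)
    (H : Finset X) : Z ∈ hyperballF Z H :=
  ⟨hZ, subset_BFset_self Z H, subset_BFset_self Z H⟩

lemma mem_hyperballF_of_subsets {X : Type*} [DecidableEq X] {Z W H : Finset X}
    (hW : W.Nonempty) (h1 : (Z ∩ H).Nonempty) (h2 : (W ∩ H).Nonempty)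
    (h3 : W ⊆ Z ∪ H) (h4 : Z ⊆ W ∪ H) : W ∈ hyperballF Z H := by
  refine ⟨hW, ?_, ?_⟩
  · rw [BFset, if_pos h1]; exact h3
  · rw [BFset, if_pos h2]; exact h4

/-- For an infinite set `κ`, `x ∈ κ` and `n ≥ 1`, the map `F ↦ F ∖ {x}` is an
asymorphism between the subballean of `F_κ^♭` with support
`{F : |F| = n+1, x ∈ F}` and the one with support `{G : |G| = n, x ∉ G}`. -/
theorem erase_asymorphism_n_subsets
    {κ : Type*} [Infinite κ] [DecidableEq κ] (x : κ) (n : ℕ) (hn : 1 ≤ n) :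
    Set.BijOn (fun F => F.erase x)
      {F : Finset κ | F.card = n + 1 ∧ x ∈ F}
      {G : Finset κ | G.card = n ∧ x ∉ G} ∧
    ∀ H : Finset κ, ∃ H' : Finset κ,
      (∀ F F' : Finset κ, F.card = n + 1 → x ∈ F → F'.card = n + 1 → x ∈ F' →
        F' ∈ hyperballF F H → F'.erase x ∈ hyperballF (F.erase x) H') ∧
      (∀ G G' : Finset κ, G.card = n → x ∉ G → G'.card = n → x ∉ G' →
        G' ∈ hyperballF G H → insert x G' ∈ hyperballF (insert x G) H') := by
  constructor
  · refine ⟨?_, ?_, ?_⟩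
    · rintro F ⟨hc, hx⟩
      exact ⟨by simp [Finset.card_erase_of_mem hx, hc], Finset.notMem_erase x F⟩
    · rintro F ⟨hcF, hxF⟩ F' ⟨hcF', hxF'⟩ h
      have := congrArg (insert x) h
      simpa [Finset.insert_erase hxF, Finset.insert_erase hxF'] using this
    · rintro G ⟨hc, hx⟩
      refine ⟨insert x G, ⟨?_, Finset.mem_insert_self x G⟩, ?_⟩
      · rw [Finset.card_insert_of_notMem hx, hc]
      · simp [Finset.erase_insert hx]
  · intro H
    refine ⟨H, ?_, ?_⟩
    · rintro F F' hcF hxF hcF' hxF' ⟨hne, h1, h2⟩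
      have hGne : (F.erase x).Nonempty := by
        rw [← Finset.card_pos, Finset.card_erase_of_mem hxF, hcF]; omega
      by_cases hFH : (F ∩ H).Nonempty
      · by_cases hF'H : (F' ∩ H).Nonempty
        · rw [BFset, if_pos hFH] at h1
          rw [BFset, if_pos hF'H] at h2
          by_cases heq : F'.erase x = F.erase x
          · rw [heq]; exact mem_hyperballF_self hGne H
          · -- erased sets differ; use equal cards to find witnesses in H
            have hG'ne : (F'.erase x).Nonempty := by
              rw [← Finset.card_pos, Finset.card_erase_of_mem hxF', hcF']; omega
            have hcard : (F'.erase x).card = (F.erase x).card := by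
              rw [Finset.card_erase_of_mem hxF', Finset.card_erase_of_mem hxF, hcF, hcF']
            have hsub1 : F'.erase x ⊆ F.erase x ∪ H := by
              intro y hy
              have hyx : y ≠ x := Finset.ne_of_mem_erase hy
              have : y ∈ F ∪ H := h1 (Finset.mem_of_mem_erase hy)
              rcases Finset.mem_union.mp this with h | h
              · exact Finset.mem_union_left _ (Finset.mem_erase.mpr ⟨hyx, h⟩)
              · exact Finset.mem_union_right _ h
            have hsub2 : F.erase x ⊆ F'.erase x ∪ H := by
              intro y hy
              have hyx : y ≠ x := Finset.ne_of_mem_erase hy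
              have : y ∈ F' ∪ H := h2 (Finset.mem_of_mem_erase hy)
              rcases Finset.mem_union.mp this with h | h
              · exact Finset.mem_union_left _ (Finset.mem_erase.mpr ⟨hyx, h⟩)
              · exact Finset.mem_union_right _ h
            have hns1 : ¬ F.erase x ⊆ F'.erase x := fun hs =>
              heq (Finset.eq_of_subset_of_card_le hs hcard.le).symm
            have hns2 : ¬ F'.erase x ⊆ F.erase x := fun hs =>
              heq (Finset.eq_of_subset_of_card_le hs hcard.ge)
            obtain ⟨y, hyG, hyG'⟩ := Finset.not_subset.mp hns1
            obtain ⟨z, hzG', hzG⟩ := Finset.not_subset.mp hns2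
            have hyH : y ∈ H := by
              rcases Finset.mem_union.mp (hsub2 hyG) with h | h
              · exact absurd h hyG'
              · exact h
            have hzH : z ∈ H := by
              rcases Finset.mem_union.mp (hsub1 hzG') with h | h
              · exact absurd h hzG
              · exact h
            exact mem_hyperballF_of_subsets hG'ne
              ⟨y, Finset.mem_inter.mpr ⟨hyG, hyH⟩⟩
              ⟨z, Finset.mem_inter.mpr ⟨hzG', hzH⟩⟩ hsub1 hsub2
        · -- F ⊆ F' forces F = F'
          rw [BFset, if_neg hF'H] at h2
          have : F = F' := Finset.eq_of_subset_of_card_le h2 (by omega)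
          rw [← this]; exact mem_hyperballF_self hGne H
      · -- F' ⊆ F forces F' = F
        rw [BFset, if_neg hFH] at h1
        have : F' = F := Finset.eq_of_subset_of_card_le h1 (by omega)
        rw [this]; exact mem_hyperballF_self hGne H
    · rintro G G' hcG hxG hcG' hxG' ⟨hne, h1, h2⟩
      have hIne : (insert x G).Nonempty := Finset.insert_nonempty x G
      by_cases hGH : (G ∩ H).Nonempty
      · by_cases hG'H : (G' ∩ H).Nonempty
        · rw [BFset, if_pos hGH] at h1
          rw [BFset, if_pos hG'H] at h2
          refine mem_hyperballF_of_subsets (Finset.insert_nonempty x G') ?_ ?_ ?_ ?_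
          · obtain ⟨y, hy⟩ := hGH
            exact ⟨y, Finset.mem_inter.mpr ⟨Finset.mem_insert_of_mem (Finset.mem_inter.mp hy).1,
              (Finset.mem_inter.mp hy).2⟩⟩
          · obtain ⟨y, hy⟩ := hG'H
            exact ⟨y, Finset.mem_inter.mpr ⟨Finset.mem_insert_of_mem (Finset.mem_inter.mp hy).1,
              (Finset.mem_inter.mp hy).2⟩⟩
          · intro y hy
            rcases Finset.mem_insert.mp hy with rfl | hy
            · exact Finset.mem_union_left _ (Finset.mem_insert_self _ _)
            · rcases Finset.mem_union.mp (h1 hy) with h | h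
              · exact Finset.mem_union_left _ (Finset.mem_insert_of_mem h)
              · exact Finset.mem_union_right _ h
          · intro y hy
            rcases Finset.mem_insert.mp hy with rfl | hy
            · exact Finset.mem_union_left _ (Finset.mem_insert_self _ _)
            · rcases Finset.mem_union.mp (h2 hy) with h | h
              · exact Finset.mem_union_left _ (Finset.mem_insert_of_mem h)
              · exact Finset.mem_union_right _ h
        · rw [BFset, if_neg hG'H] at h2
          have : G = G' := Finset.eq_of_subset_of_card_le h2 (by omega)
          rw [this]; exact mem_hyperballF_self (Finset.insert_nonempty x G') H
      · rw [BFset, if_neg hGH] at h1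
        have : G' = G := Finset.eq_of_subset_of_card_le h1 (by omega)
        rw [this]; exact mem_hyperballF_self hIne H
end
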